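/- arXiv:math/0207203 — 2 statements merged into one kernel-verified Lean document; each statement's English description precedes it below -/
import Mathlib

section
/- Let p > q > 0 be coprime with pq odd, let q/p = [a_0, ..., a_n] (a_0 = 0, a_i > 0, a_n > 1) with convergents q_i/p_i. If p_{n-1} is even, then N(pq-1, p^2) + (-1)^n = N(pq+1, p^2). -/
/-- Continued fraction value: `cf [a₀, a₁, ..., aₙ] = a₀ + 1/(a₁ + 1/(... + 1/aₙ))`. -/
def cf : List ℤ → ℚ
  | [] => 0
  | [a] => (a : ℚ)
  | a :: l => (a : ℚ) + (cf l)⁻¹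

/-- Auxiliary for the Bredon–Wood sum: carries previous `a`, previous `b`,
and the partial sum of the `b`'s. -/
def NsumAux : ℤ → ℤ → ℤ → List ℤ → ℤ
  | _, _, s, [] => s
  | pa, pb, s, a :: l =>
      NsumAux a (if pb = pa ∧ Even s then 0 else a)
        (s + (if pb = pa ∧ Even s then 0 else a)) l

/-- `Nsum [a₀,...,aₙ] = b₀ + ... + bₙ` where `b₀ = a₀` and
`bᵢ = 0` if `bᵢ₋₁ = aᵢ₋₁` and `b₀ + ... + bᵢ₋₁` is even, else `bᵢ = aᵢ`.
The Bredon–Wood invariant is `N(x,y) = Nsum l / 2` for `l` the continued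
fraction expansion of `x/y`. -/
def Nsum : List ℤ → ℤ
  | [] => 0
  | a :: l => NsumAux a a a l

/-- A valid continued fraction expansion: nonempty, `a₀ ≥ 0`,
`aᵢ > 0` for `i ≥ 1`, and the last term `> 1`. -/
def ValidCF (l : List ℤ) : Prop :=
  l ≠ [] ∧ 0 ≤ l.headI ∧ (∀ a ∈ l.tail, 0 < a) ∧ 1 < l.getLast!


lemma cf_cons (a : ℤ) (l : List ℤ) (h : l ≠ []) : cf (a :: l) = (a : ℚ) + (cf l)⁻¹ := by
  cases l with
  | nil => simp at h
  | cons b t => rfl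

lemma getLast!_cons_cons (a b : ℤ) (t : List ℤ) :
    (a :: b :: t).getLast! = (b :: t).getLast! := by
  rcases t with _ | ⟨c, t⟩ <;> rfl

lemma getLast!_concat (h : ℤ) (Z : List ℤ) : (Z ++ [h]).getLast! = h := by
  induction Z with
  | nil => rfl
  | cons z Z ih =>
      rcases Z with _ | ⟨w, Z⟩
      · rfl
      · rw [List.cons_append, List.cons_append, getLast!_cons_cons, ← List.cons_append]
        exact ih

/-- positive lists with last entry > 1 have cf value > 1 -/
lemma one_lt_cf (l : List ℤ) (hne : l ≠ []) (hpos : ∀ x ∈ l, 0 < x)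
    (hlast : 1 < l.getLast!) : 1 < cf l := by
  induction l with
  | nil => simp at hne
  | cons a t ih =>
      cases t with
      | nil =>
          have : (1:ℤ) < a := by simpa [List.getLast!_cons_eq_getLastD] using hlast
          have : (1:ℚ) < (a:ℚ) := by exact_mod_cast this
          simpa [cf] using this
      | cons b t' =>
          have h1 : 1 < cf (b :: t') := by
            apply ih (by simp) (fun x hx => hpos x (List.mem_cons_of_mem a hx))
            rw [← getLast!_cons_cons a]; exact hlast
          have ha : (1:ℤ) ≤ a := hpos a (by simp)
          have ha' : (1:ℚ) ≤ (a:ℚ) := by exact_mod_cast ha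
          rw [cf_cons a _ (by simp)]
          have : 0 < (cf (b :: t'))⁻¹ := by positivity
          linarith

lemma cf_lt (a : ℤ) (t : List ℤ) (hne : t ≠ []) (hpos : ∀ x ∈ t, 0 < x)
    (hlast : 1 < t.getLast!) : (a:ℚ) < cf (a :: t) ∧ cf (a :: t) < a + 1 := by
  have h1 := one_lt_cf t hne hpos hlast
  rw [cf_cons a t hne]
  constructor
  · have : 0 < (cf t)⁻¹ := by positivity
    linarith
  · have h0 : (0:ℚ) < cf t := by linarith
    have : (cf t)⁻¹ < 1 := by
      rw [inv_lt_one_iff₀]; right; exact h1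
    linarith

/-- tail of a ValidCF list of length ≥ 2 is ValidCF-like with positive entries -/
lemma validcf_uniq : ∀ (l l' : List ℤ), ValidCF l → ValidCF l' → cf l = cf l' → l = l' := by
  intro l
  induction l with
  | nil => intro l' h; exact absurd rfl h.1
  | cons a t ih =>
      intro l' ⟨_, _, hpos, hlast⟩ hv' hcf
      obtain ⟨hne', _, hpos', hlast'⟩ := hv'
      rcases l' with _ | ⟨a', t'⟩
      · exact absurd rfl hne'
      clear hne'
      have htpos : ∀ x ∈ t, 0 < x := by simpa using hpos
      have htpos' : ∀ x ∈ t', 0 < x := by simpa using hpos'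
      rcases t with _ | ⟨b, s⟩ <;> rcases t' with _ | ⟨b', s'⟩
      · -- both singleton
        simp [cf] at hcf
        exact_mod_cast congrArg (fun x => ([x] : List ℤ)) (by exact_mod_cast hcf)
      · -- l singleton, l' not
        exfalso
        have hl' : 1 < (b' :: s').getLast! := by rw [← getLast!_cons_cons a']; exact hlast'
        have ⟨h1, h2⟩ := cf_lt a' (b' :: s') (by simp) htpos' hl'
        rw [← hcf] at h1 h2
        simp only [cf] at h1 h2
        have : a' < a := by exact_mod_cast h1
        have : a < a' + 1 := by exact_mod_cast h2
        omega
      · exfalso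
        have hl : 1 < (b :: s).getLast! := by rw [← getLast!_cons_cons a]; exact hlast
        have ⟨h1, h2⟩ := cf_lt a (b :: s) (by simp) htpos hl
        rw [hcf] at h1 h2
        simp only [cf] at h1 h2
        have : a < a' := by exact_mod_cast h1
        have : a' < a + 1 := by exact_mod_cast h2
        omega
      · -- both length ≥ 2
        have hl : 1 < (b :: s).getLast! := by rw [← getLast!_cons_cons a]; exact hlast
        have hl' : 1 < (b' :: s').getLast! := by rw [← getLast!_cons_cons a']; exact hlast'
        have ⟨h1, h2⟩ := cf_lt a (b :: s) (by simp) htpos hl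
        have ⟨h1', h2'⟩ := cf_lt a' (b' :: s') (by simp) htpos' hl'
        rw [hcf] at h1 h2
        have haa : a = a' := by
          have : a < a' + 1 := by exact_mod_cast lt_of_lt_of_le h1 (le_of_lt h2')
          have : a' < a + 1 := by exact_mod_cast lt_of_lt_of_le h1' (le_of_lt h2)
          omega
        subst haa
        have hteq : cf (b :: s) = cf (b' :: s') := by
          have e1 := cf_cons a (b :: s) (by simp)
          have e2 := cf_cons a (b' :: s') (by simp)
          rw [e1, e2] at hcf
          have : (cf (b :: s))⁻¹ = (cf (b' :: s'))⁻¹ := by linarith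
          exact inv_injective this
        have := ih (b' :: s') ⟨by simp, le_of_lt (by exact_mod_cast htpos b (by simp)), fun x hx => htpos x (List.mem_cons_of_mem b hx), hl⟩
          ⟨by simp, le_of_lt (by exact_mod_cast htpos' b' (by simp)), fun x hx => htpos' x (List.mem_cons_of_mem b' hx), hl'⟩ hteq
        rw [this]

/-- cf with continuation value -/
def G : List ℤ → ℚ → ℚ
  | [], x => x
  | a :: l, x => (a : ℚ) + (G l x)⁻¹

lemma cf_append (L M : List ℤ) (h : M ≠ []) : cf (L ++ M) = G L (cf M) := by
  induction L with
  | nil => rfl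
  | cons a L ih =>
      have hne : L ++ M ≠ [] := by simp [h]
      rw [List.cons_append, cf_cons a _ hne, ih, G]

lemma G_concat (L : List ℤ) (t : ℤ) (x : ℚ) : G (L ++ [t]) x = G L ((t : ℚ) + x⁻¹) := by
  induction L with
  | nil => rfl
  | cons a L ih => rw [List.cons_append, G, ih, G]

lemma cf_concat_one (L : List ℤ) (x : ℤ) : cf (L ++ [x, 1]) = cf (L ++ [x + 1]) := by
  rw [cf_append L [x, 1] (by simp), cf_append L [x+1] (by simp)]
  norm_num [cf]

/-- shifting the running sum by an even amount shifts the result -/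
lemma nsumAux_shift (L : List ℤ) : ∀ pa pb s t,
    NsumAux pa pb (s + 2 * t) L = NsumAux pa pb s L + 2 * t := by
  induction L with
  | nil => intro pa pb s t; simp [NsumAux]
  | cons a L ih =>
      intro pa pb s t
      have hev : Even (s + 2 * t) ↔ Even s := by
        constructor <;> intro h
        · have := h.sub (even_two_mul t); simpa using this
        · exact h.add (even_two_mul t)
      by_cases hc : pb = pa ∧ Even s
      · rw [NsumAux, NsumAux, if_pos ⟨hc.1, hev.mpr hc.2⟩, if_pos hc]
        rw [add_zero, add_zero, ih]
      · have hc' : ¬(pb = pa ∧ Even (s + 2*t)) := fun h => hc ⟨h.1, hev.mp h.2⟩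
        rw [NsumAux, NsumAux, if_neg hc', if_neg hc]
        rw [show s + 2*t + a = (s + a) + 2*t by ring, ih]

def stepN : (ℤ × ℤ × ℤ) → ℤ → (ℤ × ℤ × ℤ) :=
  fun r t => if r.2.1 = r.1 ∧ Even r.2.2 then (t, 0, r.2.2) else (t, t, r.2.2 + t)

lemma nsumAux_append (L : List ℤ) : ∀ (M : List ℤ) (r : ℤ × ℤ × ℤ),
    NsumAux r.1 r.2.1 r.2.2 (L ++ M) =
      NsumAux (L.foldl stepN r).1 (L.foldl stepN r).2.1 (L.foldl stepN r).2.2 M := by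
  induction L with
  | nil => intro M r; rfl
  | cons a L ih =>
      intro M r
      rw [List.cons_append, List.foldl_cons, ← ih]
      by_cases hc : r.2.1 = r.1 ∧ Even r.2.2
      · simp only [NsumAux, stepN, if_pos hc, add_zero]
      · simp only [NsumAux, stepN, if_neg hc]

lemma cf_adjust (t x : ℤ) (X : List ℤ) :
    cf (t :: (X ++ [x + 1])) = cf (t :: (X ++ [x, 1])) := by
  rw [show t :: (X ++ [x+1]) = (t :: X) ++ [x+1] by simp,
      show t :: (X ++ [x, 1]) = (t :: X) ++ [x, 1] by simp, cf_concat_one]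

-- new material
def sh (f : ℕ → ℤ) (z : ℤ) : ℕ → ℤ
  | 0 => z
  | k+1 => f k

def pfx (a : ℕ → ℤ) (k : ℕ) : List ℤ := (List.range k).map (fun i => a (i+1))

lemma pfx_succ (a : ℕ → ℤ) (k : ℕ) : pfx a (k+1) = pfx a k ++ [a (k+1)] := by
  simp [pfx, List.range_succ]

lemma pfx_ne_nil (a : ℕ → ℤ) (k : ℕ) (h : 1 ≤ k) : pfx a k ≠ [] := by
  simp [pfx, List.range_eq_nil]; omega

section PQ
variable {a P Q : ℕ → ℤ} {N : ℕ}

lemma det_lemma (hP0 : P 0 = 1) (hQ0 : Q 0 = 0)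
    (hP : ∀ k, P (k+1) = a (k+1) * P k + sh P 0 k)
    (hQ : ∀ k, Q (k+1) = a (k+1) * Q k + sh Q 1 k) :
    ∀ k, P k * sh Q 1 k - sh P 0 k * Q k = (-1)^k := by
  intro k
  induction k with
  | zero => simp [sh, hP0, hQ0]
  | succ k ih =>
      show P (k+1) * Q k - P k * Q (k+1) = (-1)^(k+1)
      rw [hP k, hQ k, pow_succ]
      linear_combination (-1 : ℤ) * ih

lemma Ppos_lemma (hP0 : P 0 = 1)
    (hpos : ∀ i, 1 ≤ i → i ≤ N → 0 < a i)
    (hP : ∀ k, P (k+1) = a (k+1) * P k + sh P 0 k) :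
    ∀ k, k ≤ N → 0 < P k ∧ 0 ≤ sh P 0 k := by
  intro k
  induction k with
  | zero => intro _; simp [sh, hP0]
  | succ k ih =>
      intro hk
      obtain ⟨h1, h2⟩ := ih (by omega)
      have ha := hpos (k+1) (by omega) hk
      refine ⟨?_, by simpa [sh] using le_of_lt h1⟩
      rw [hP k]; nlinarith

lemma Qpos_lemma (hQ0 : Q 0 = 0)
    (hpos : ∀ i, 1 ≤ i → i ≤ N → 0 < a i)
    (hQ : ∀ k, Q (k+1) = a (k+1) * Q k + sh Q 1 k) :
    ∀ k, k ≤ N → 0 ≤ Q k ∧ 0 ≤ sh Q 1 k ∧ 0 < Q k + sh Q 1 k := by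
  intro k
  induction k with
  | zero => intro _; simp [sh, hQ0]
  | succ k ih =>
      intro hk
      obtain ⟨h1, h2, h3⟩ := ih (by omega)
      have ha := hpos (k+1) (by omega) hk
      have hsh : sh Q 1 (k+1) = Q k := rfl
      refine ⟨?_, by rw [hsh]; exact h1, ?_⟩
      · rw [hQ k]; nlinarith
      · rw [hQ k, hsh]; nlinarith

lemma Qpar_lemma (hQ0 : Q 0 = 0)
    (hQ : ∀ k, Q (k+1) = a (k+1) * Q k + sh Q 1 k) :
    ∀ k, ¬(Even (Q k) ∧ Even (sh Q 1 k)) := by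
  intro k
  induction k with
  | zero =>
      rintro ⟨-, h⟩
      have : (1:ℤ) % 2 = 0 := Int.even_iff.mp (by simpa [sh] using h)
      omega
  | succ k ih =>
      rintro ⟨h1, h2⟩
      have hsh : sh Q 1 (k+1) = Q k := rfl
      rw [hsh] at h2
      apply ih
      refine ⟨h2, ?_⟩
      have : sh Q 1 k = Q (k+1) - a (k+1) * Q k := by rw [hQ k]; ring
      rw [this]
      exact h1.sub (h2.mul_left _)

lemma G_pfx (hP0 : P 0 = 1) (hQ0 : Q 0 = 0)
    (hpos : ∀ i, 1 ≤ i → i ≤ N → 0 < a i)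
    (hP : ∀ k, P (k+1) = a (k+1) * P k + sh P 0 k)
    (hQ : ∀ k, Q (k+1) = a (k+1) * Q k + sh Q 1 k) :
    ∀ k, k ≤ N → ∀ x : ℚ, 1 ≤ x →
      G (pfx a k) x = ((P k : ℚ) * x + (sh P 0 k : ℚ)) / ((Q k : ℚ) * x + (sh Q 1 k : ℚ)) := by
  intro k
  induction k with
  | zero => intro _ x hx; simp [pfx, G, sh, hP0, hQ0]
  | succ k ih =>
      intro hk x hx
      have hx0 : (0:ℚ) < x := by linarith
      have ha := hpos (k+1) (by omega) hk
      have ha1 : (1:ℚ) ≤ ((a (k+1) : ℤ) : ℚ) := by exact_mod_cast ha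
      have hu1 : (1:ℚ) ≤ (a (k+1) : ℚ) + x⁻¹ := by
        have : (0:ℚ) < x⁻¹ := by positivity
        linarith
      rw [pfx_succ, G_concat, ih (by omega) _ hu1]
      -- denominators
      obtain ⟨hq1, hq2, hq3⟩ := Qpos_lemma hQ0 hpos hQ k (by omega)
      obtain ⟨hq1', hq2', hq3'⟩ := Qpos_lemma hQ0 hpos hQ (k+1) hk
      have hden1 : (0:ℚ) < (Q k : ℚ) * ((a (k+1) : ℚ) + x⁻¹) + (sh Q 1 k : ℚ) := by
        have c1 : (0:ℚ) ≤ (Q k : ℚ) := by exact_mod_cast hq1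
        have c2 : (0:ℚ) ≤ (sh Q 1 k : ℚ) := by exact_mod_cast hq2
        have c3 : (0:ℚ) < (Q k : ℚ) + (sh Q 1 k : ℚ) := by exact_mod_cast hq3
        nlinarith
      have hden2 : (0:ℚ) < (Q (k+1) : ℚ) * x + (sh Q 1 (k+1) : ℚ) := by
        have c1 : (0:ℚ) ≤ (Q (k+1) : ℚ) := by exact_mod_cast hq1'
        have c2 : (0:ℚ) ≤ (sh Q 1 (k+1) : ℚ) := by exact_mod_cast hq2'
        have c3 : (0:ℚ) < (Q (k+1) : ℚ) + (sh Q 1 (k+1) : ℚ) := by exact_mod_cast hq3'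
        nlinarith
      rw [div_eq_div_iff (ne_of_gt hden1) (ne_of_gt hden2)]
      have hPk : ((P (k+1) : ℤ) : ℚ) = (a (k+1) : ℚ) * (P k : ℚ) + (sh P 0 k : ℚ) := by
        exact_mod_cast congrArg (fun z : ℤ => (z : ℚ)) (hP k)
      have hQk : ((Q (k+1) : ℤ) : ℚ) = (a (k+1) : ℚ) * (Q k : ℚ) + (sh Q 1 k : ℚ) := by
        exact_mod_cast congrArg (fun z : ℤ => (z : ℚ)) (hQ k)
      have hshP : (sh P 0 (k+1) : ℚ) = (P k : ℚ) := rfl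
      have hshQ : (sh Q 1 (k+1) : ℚ) = (Q k : ℚ) := rfl
      rw [hPk, hQk, hshP, hshQ]
      field_simp
      ring

lemma cf_rev_pfx (hP0 : P 0 = 1) (hP1 : P 1 = a 1)
    (hpos : ∀ i, 1 ≤ i → i ≤ N → 0 < a i)
    (hP : ∀ k, P (k+1) = a (k+1) * P k + sh P 0 k) :
    ∀ k, 1 ≤ k → k ≤ N → cf (pfx a k).reverse = (P k : ℚ) / (sh P 0 k : ℚ) := by
  intro k
  induction k with
  | zero => omega
  | succ k ih =>
      intro _ hk
      rcases Nat.eq_zero_or_pos k with rfl | hk1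
      · show cf (pfx a 1).reverse = (P 1 : ℚ) / (sh P 0 1 : ℚ)
        have : pfx a 1 = [a 1] := by simp [pfx, List.range_succ]
        rw [this, hP1]
        show ((a 1 : ℤ) : ℚ) = _
        simp [sh, hP0]
      · have hrev : (pfx a (k+1)).reverse = a (k+1) :: (pfx a k).reverse := by
          rw [pfx_succ]; simp
        rw [hrev, cf_cons _ _ (by simp [pfx_ne_nil a k hk1]),
          ih hk1 (by omega)]
        obtain ⟨hp1, hp2⟩ := Ppos_lemma hP0 hpos hP k (by omega)
        have c1 : (0:ℚ) < (P k : ℚ) := by exact_mod_cast hp1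
        have hshP : (sh P 0 (k+1) : ℚ) = (P k : ℚ) := rfl
        have hPk : ((P (k+1) : ℤ) : ℚ) = (a (k+1) : ℚ) * (P k : ℚ) + (sh P 0 k : ℚ) := by
          exact_mod_cast congrArg (fun z : ℤ => (z : ℚ)) (hP k)
        rw [inv_div, hshP, hPk]
        field_simp

/-- state after processing `0 :: pfx a k` -/
def St (a : ℕ → ℤ) (k : ℕ) : ℤ × ℤ × ℤ := (pfx a k).foldl stepN (0, 0, 0)

lemma St_succ (a : ℕ → ℤ) (k : ℕ) : St a (k+1) = stepN (St a k) (a (k+1)) := by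
  simp [St, pfx_succ, List.foldl_append]

lemma inv_lemma (h0 : a 0 = 0) (hQ0 : Q 0 = 0)
    (hpos : ∀ i, 1 ≤ i → i ≤ N → 0 < a i)
    (hQ : ∀ k, Q (k+1) = a (k+1) * Q k + sh Q 1 k) :
    ∀ k, k ≤ N →
      (St a k).1 = a k ∧
      (((St a k).2.1 = (St a k).1 ∧ Even (St a k).2.2) ↔ Even (Q k)) ∧
      (Odd (St a k).2.2 ↔ (Odd (Q k) ∧ Odd (sh Q 1 k))) := by
  intro k
  induction k with
  | zero =>
      intro _
      refine ⟨by simp [St, pfx, h0], by simp [St, pfx, hQ0], ?_⟩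
      simp [St, pfx, hQ0, sh, Int.odd_iff]
  | succ k ih =>
      intro hk
      obtain ⟨i0, i1, i2⟩ := ih (by omega)
      have hpar := Qpar_lemma hQ0 hQ k
      have ha := hpos (k+1) (by omega) hk
      have hshQ : sh Q 1 (k+1) = Q k := rfl
      rw [St_succ]
      rcases hSt : St a k with ⟨pa, pb, s⟩
      rw [hSt] at i0 i1 i2
      simp only at i0 i1 i2
      by_cases hc : pb = pa ∧ Even s
      · -- previous flag set: b_{k+1} = 0
        have hQke : Even (Q k) := i1.mp hc
        have hQ'o : ¬ Even (sh Q 1 k) := fun h => hpar ⟨hQke, h⟩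
        have hQk1o : ¬ Even (Q (k+1)) := by
          rw [hQ k]
          intro h
          exact hQ'o ((Int.even_add.mp h).mp (hQke.mul_left _))
        have hstep : stepN (pa, pb, s) (a (k+1)) = (a (k+1), 0, s) := by
          simp [stepN, if_pos hc]
        rw [hstep]
        refine ⟨rfl, ?_, ?_⟩
        · constructor
          · rintro ⟨h1, -⟩
            have h2 : (0:ℤ) = a (k+1) := h1
            exfalso; omega
          · intro h; exact absurd h hQk1o
        · rw [hshQ]
          constructor
          · intro h
            exact absurd hc.2 (by simpa [Int.not_even_iff_odd] using h)
          · rintro ⟨-, h⟩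
            exact absurd hQke (by simpa [← Int.not_even_iff_odd] using h)
      · -- previous flag unset: b_{k+1} = a_{k+1}
        have hQko : ¬ Even (Q k) := fun h => hc (i1.mpr h)
        have hQkodd : Odd (Q k) := Int.not_even_iff_odd.mp hQko
        have hs : Even s ↔ Even (sh Q 1 k) := by
          rw [← Int.not_odd_iff_even, ← Int.not_odd_iff_even, i2, and_iff_right hQkodd]
        have hmul : Even (a (k+1) * Q k) ↔ Even (a (k+1)) := by
          rw [Int.even_mul]
          simp [hQko]
        have hstep : stepN (pa, pb, s) (a (k+1)) = (a (k+1), a (k+1), s + a (k+1)) := by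
          simp [stepN, if_neg hc]
        rw [hstep]
        refine ⟨rfl, ?_, ?_⟩
        · rw [hQ k, Int.even_add, Int.even_add, hmul, hs]
          constructor
          · rintro ⟨-, h⟩; exact h.symm
          · intro h; exact ⟨rfl, h.symm⟩
        · show Odd (s + a (k+1)) ↔ Odd (Q (k+1)) ∧ Odd (Q k)
          rw [hQ k, and_iff_left hQkodd,
            ← Int.not_even_iff_odd, ← Int.not_even_iff_odd, not_iff_not,
            Int.even_add, Int.even_add, hmul, hs]
          exact Iff.comm
end PQ

lemma pfx_split1 (a : ℕ → ℤ) (m : ℕ) :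
    pfx a (m+1) = a 1 :: (List.range m).map (fun i => a (i+2)) := by
  rw [pfx, List.range_succ_eq_map, List.map_cons, List.map_map]
  congr 1

lemma pfx_split2 (a : ℕ → ℤ) (m : ℕ) (hm : 1 ≤ m) :
    pfx a (m+1) = a 1 :: a 2 :: (List.range (m-1)).map (fun i => a (i+3)) := by
  obtain ⟨m', rfl⟩ : ∃ m', m = m' + 1 := ⟨m-1, by omega⟩
  rw [pfx_split1]
  congr 1
  rw [List.range_succ_eq_map, List.map_cons, List.map_map, Nat.add_sub_cancel]
  rfl

lemma core_algebra (A R S U V d p q D : ℚ) (hd : d = 1 ∨ d = -1)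
    (hR : 0 < R) (hS : 0 < S) (hU : 1 ≤ U) (hV : 0 ≤ V) (hA : 2 ≤ A)
    (hp : p = A*R + S) (hq : q = A*U + V) (hD : D = S*U - R*V) :
    (U * ((A + d) + ((p - d*R)/R)⁻¹) + V) / (R * ((A + d) + ((p - d*R)/R)⁻¹) + S)
      = (p*q + d*D)/p^2 := by
  subst hp hq hD
  rw [inv_div]
  have hu : 0 < A*R + S - d*R := by rcases hd with rfl | rfl <;> nlinarith
  have hx1 : (1:ℚ) ≤ (A + d) + R/((A*R+S) - d*R) := by
    have : 0 < R / (A*R+S - d*R) := div_pos hR hu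
    rcases hd with rfl | rfl <;> nlinarith
  have hden : 0 < R * ((A + d) + R/((A*R+S) - d*R)) + S := by nlinarith
  have hp0 : 0 < A*R + S := by nlinarith
  rw [div_eq_div_iff hden.ne' (by positivity)]
  field_simp
  rcases hd with rfl | rfl <;> ring

theorem crosscap_stmt13 (p q n : ℕ) (a P Q : ℕ → ℤ)
    (hq : 0 < q) (hqp : q < p) (hcop : Nat.Coprime p q) (hpodd : Odd p) (hqodd : Odd q)
    (h0 : a 0 = 0) (hpos : ∀ i, 1 ≤ i → i ≤ n → 0 < a i) (hlast : 1 < a n)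
    (hcf : cf (List.ofFn fun i : Fin (n+1) => a i) = (q : ℚ) / p)
    (hP0 : P 0 = 1) (hP1 : P 1 = a 1) (hPr : ∀ i, P (i+2) = a (i+2) * P (i+1) + P i)
    (hQ0 : Q 0 = 0) (hQ1 : Q 1 = 1) (hQr : ∀ i, Q (i+2) = a (i+2) * Q (i+1) + Q i)
    (hPn : P n = p) (hQn : Q n = q)
    (hPeven : Even (P (n-1)))
    (l1 l2 : List ℤ) (hl1 : ValidCF l1) (hl2 : ValidCF l2)
    (hc1 : cf l1 = ((p:ℚ) * q - 1) / (p:ℚ)^2)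
    (hc2 : cf l2 = ((p:ℚ) * q + 1) / (p:ℚ)^2) :
    Nsum l1 / 2 + (-1)^n = Nsum l2 / 2 := by
  -- basic: n ≥ 2
  have hn0 : n ≠ 0 := by
    rintro rfl
    rw [h0] at hlast
    norm_num at hlast
  have hn1 : n ≠ 1 := by
    rintro rfl
    have h : Even (P 0) := hPeven
    rw [hP0] at h
    have := Int.even_iff.mp h
    omega
  obtain ⟨m, rfl⟩ : ∃ m, n = m + 2 := ⟨n - 2, by omega⟩
  have hPeven' : Even (P (m+1)) := hPeven
  have han : 2 ≤ a (m+2) := hlast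
  have hpos' : ∀ i, 1 ≤ i → i ≤ m+2 → 0 < a i := hpos
  -- uniform recursions
  have hPrec : ∀ k, P (k+1) = a (k+1) * P k + sh P 0 k := by
    intro k
    cases k with
    | zero => simp [sh, hP0, hP1]
    | succ k => exact hPr k
  have hQrec : ∀ k, Q (k+1) = a (k+1) * Q k + sh Q 1 k := by
    intro k
    cases k with
    | zero => simp [sh, hQ0, hQ1]
    | succ k => exact hQr k
  have hdet := det_lemma hP0 hQ0 hPrec hQrec
  have hPposA := Ppos_lemma (N := m+2) hP0 hpos' hPrec
  have hQposA := Qpos_lemma (N := m+2) hQ0 hpos' hQrec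
  -- arithmetic consequences
  have hq2 : Odd (Q (m+2)) := by rw [hQn]; exact (Int.odd_coe_nat q).mpr hqodd
  have hdetn : (p:ℤ) * Q (m+1) - P (m+1) * (q:ℤ) = (-1)^(m+2) := by
    have h := hdet (m+2)
    rw [show sh Q 1 (m+2) = Q (m+1) from rfl, show sh P 0 (m+2) = P (m+1) from rfl,
      hPn, hQn] at h
    exact h
  have hQm1odd : Odd (Q (m+1)) := by
    by_contra hcon
    have hev : Even (Q (m+1)) := Int.not_odd_iff_even.mp hcon
    have h2 : Even ((p:ℤ) * Q (m+1) - P (m+1) * (q:ℤ)) :=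
      (hev.mul_left _).sub (hPeven'.mul_right _)
    rw [hdetn] at h2
    exact (Int.not_odd_iff_even.mpr h2) (Odd.pow ⟨-1, by ring⟩)
  have hQm1pos : 1 ≤ Q (m+1) := by
    have h1 := (hQposA (m+1) (by omega)).1
    rcases hQm1odd with ⟨c, hc⟩
    omega
  have hP0m1 : 0 < P (m+1) := (hPposA (m+1) (by omega)).1
  have hP0m : 0 < P m := (hPposA m (by omega)).1
  have hQmnn : 0 ≤ Q m := (hQposA m (by omega)).1
  have hpZ : (p:ℤ) = a (m+2) * P (m+1) + P m := by
    rw [← hPn]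
    simpa [sh] using hPrec (m+1)
  have hqZ : (q:ℤ) = a (m+2) * Q (m+1) + Q m := by
    rw [← hQn]
    simpa [sh] using hQrec (m+1)
  have hdetz : P m * Q (m+1) - P (m+1) * Q m = (-1:ℤ)^(m+2) := by
    linear_combination hdetn - Q (m+1) * hpZ + P (m+1) * hqZ
  -- the adjusted reversed tail
  obtain ⟨h₀, B₁, hh₀, hBpos, hcfB⟩ :
      ∃ h₀ B₁, 1 < h₀ ∧ (∀ x ∈ h₀ :: B₁, 0 < x) ∧
        (∀ t : ℤ, cf (t :: (h₀ :: B₁).reverse) = cf (t :: (pfx a (m+1)).reverse)) := by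
    by_cases h1 : a 1 = 1
    · have hm1 : 1 ≤ m := by
        by_contra hm
        have hm0 : m = 0 := by omega
        subst hm0
        rw [hP1, h1] at hPeven'
        have := Int.even_iff.mp hPeven'
        omega
      refine ⟨a 2 + 1, (List.range (m-1)).map (fun i => a (i+3)), ?_, ?_, ?_⟩
      · have := hpos' 2 (by omega) (by omega)
        omega
      · intro x hx
        rcases List.mem_cons.mp hx with rfl | hx
        · have := hpos' 2 (by omega) (by omega)
          omega
        · obtain ⟨i, hi, rfl⟩ := List.mem_map.mp hx
          have := List.mem_range.mp hi
          exact hpos' (i+3) (by omega) (by omega)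
      · intro t
        rw [pfx_split2 a m hm1, h1]
        simp only [List.reverse_cons, List.append_assoc, List.singleton_append]
        exact cf_adjust t (a 2) _
    · refine ⟨a 1, (List.range m).map (fun i => a (i+2)), ?_, ?_, fun t => ?_⟩
      · have := hpos' 1 (by omega) (by omega)
        omega
      · intro x hx
        rcases List.mem_cons.mp hx with rfl | hx
        · exact hpos' 1 (by omega) (by omega)
        · obtain ⟨i, hi, rfl⟩ := List.mem_map.mp hx
          have := List.mem_range.mp hi
          exact hpos' (i+2) (by omega) (by omega)
      · rw [pfx_split1]
  -- validity of the constructed lists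
  have hvalid : ∀ δ : ℤ, δ = 1 ∨ δ = -1 →
      ValidCF (0 :: (pfx a (m+1) ++ ((a (m+2) + δ) :: (a (m+2) - δ) :: (h₀ :: B₁).reverse))) := by
    intro δ hδ
    refine ⟨by simp, by simp, ?_, ?_⟩
    · intro x hx
      simp only [List.tail_cons] at hx
      rcases List.mem_append.mp hx with h | h
      · obtain ⟨i, hi, rfl⟩ := List.mem_map.mp h
        have := List.mem_range.mp hi
        exact hpos' (i+1) (by omega) (by omega)
      · rcases List.mem_cons.mp h with rfl | h
        · rcases hδ with rfl | rfl <;> omega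
        · rcases List.mem_cons.mp h with rfl | h
          · rcases hδ with rfl | rfl <;> omega
          · exact hBpos x (List.mem_reverse.mp h)
    · have hshape : (0 :: (pfx a (m+1) ++ ((a (m+2) + δ) :: (a (m+2) - δ) :: (h₀ :: B₁).reverse)))
          = (0 :: (pfx a (m+1) ++ ((a (m+2) + δ) :: (a (m+2) - δ) :: B₁.reverse))) ++ [h₀] := by
        simp [List.reverse_cons]
      rw [hshape, getLast!_concat]
      exact hh₀
  -- cast facts
  have hRq : (0:ℚ) < (P (m+1) : ℚ) := by exact_mod_cast hP0m1
  have hSq : (0:ℚ) < (P m : ℚ) := by exact_mod_cast hP0m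
  have hUq : (1:ℚ) ≤ (Q (m+1) : ℚ) := by exact_mod_cast hQm1pos
  have hVq : (0:ℚ) ≤ (Q m : ℚ) := by exact_mod_cast hQmnn
  have hAq : (2:ℚ) ≤ (a (m+2) : ℚ) := by exact_mod_cast han
  have hpQ : ((p:ℕ):ℚ) = (a (m+2) : ℚ) * (P (m+1) : ℚ) + (P m : ℚ) := by
    exact_mod_cast hpZ
  have hqQ : ((q:ℕ):ℚ) = (a (m+2) : ℚ) * (Q (m+1) : ℚ) + (Q m : ℚ) := by
    exact_mod_cast hqZ
  have hdetQ : ((-1:ℚ)^(m+2)) = (P m : ℚ) * (Q (m+1) : ℚ) - (P (m+1) : ℚ) * (Q m : ℚ) := by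
    exact_mod_cast hdetz.symm
  have hrevne : (pfx a (m+1)).reverse ≠ [] := by
    simp [pfx, List.range_eq_nil]
  -- the value computation
  have hkey : ∀ δ : ℤ, δ = 1 ∨ δ = -1 →
      cf (0 :: (pfx a (m+1) ++ ((a (m+2) + δ) :: (a (m+2) - δ) :: (h₀ :: B₁).reverse)))
        = ((p:ℚ) * q + (δ:ℚ) * (-1)^(m+2)) / (p:ℚ)^2 := by
    intro δ hδ
    have hδ1 : (δ:ℚ) = 1 ∨ (δ:ℚ) = -1 := by rcases hδ with rfl | rfl <;> norm_num
    have hw : cf ((a (m+2) - δ) :: (h₀ :: B₁).reverse)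
        = (((p:ℕ):ℚ) - (δ:ℚ) * (P (m+1):ℚ)) / (P (m+1):ℚ) := by
      rw [hcfB, cf_cons _ _ hrevne,
        cf_rev_pfx (N := m+2) hP0 hP1 hpos' hPrec (m+1) (by omega) (by omega),
        show ((sh P 0 (m+1) : ℤ):ℚ) = ((P m : ℤ):ℚ) from rfl, inv_div, hpQ]
      push_cast
      field_simp
      ring
    have hw1 : 1 < cf ((a (m+2) - δ) :: (h₀ :: B₁).reverse) := by
      rw [hw, lt_div_iff₀ hRq, hpQ]
      rcases hδ1 with h | h <;> rw [h] <;> nlinarith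
    have hx : cf ((a (m+2) + δ) :: ((a (m+2) - δ) :: (h₀ :: B₁).reverse))
        = ((a (m+2):ℚ) + (δ:ℚ)) + (cf ((a (m+2) - δ) :: (h₀ :: B₁).reverse))⁻¹ := by
      rw [cf_cons _ _ (by simp)]
      push_cast
      ring
    have hx1 : 1 ≤ cf ((a (m+2) + δ) :: ((a (m+2) - δ) :: (h₀ :: B₁).reverse)) := by
      rw [hx]
      have h2 : 0 < (cf ((a (m+2) - δ) :: (h₀ :: B₁).reverse))⁻¹ := by
        apply inv_pos.mpr
        linarith
      rcases hδ1 with h | h <;> rw [h] <;> nlinarith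
    rw [cf_cons _ _ (by simp), cf_append _ _ (by simp),
      G_pfx (N := m+2) hP0 hQ0 hpos' hPrec hQrec (m+1) (by omega) _ hx1,
      show ((sh P 0 (m+1) : ℤ):ℚ) = ((P m : ℤ):ℚ) from rfl,
      show ((sh Q 1 (m+1) : ℤ):ℚ) = ((Q m : ℤ):ℚ) from rfl,
      hx, hw]
    simp only [Int.cast_zero, zero_add]
    rw [inv_div]
    exact core_algebra _ _ _ _ _ _ _ _ _ hδ1 hRq hSq hUq hVq hAq hpQ hqQ hdetQ
  -- the Nsum computation
  obtain ⟨t₀, T₁, hrev⟩ := List.exists_cons_of_ne_nil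
    (show (h₀ :: B₁).reverse ≠ [] by simp)
  have hinv := inv_lemma (N := m+2) h0 hQ0 hpos' hQrec (m+1) (by omega)
  have hflag : ¬((St a (m+1)).2.1 = (St a (m+1)).1 ∧ Even ((St a (m+1)).2.2)) := by
    intro hc
    have := hinv.2.1.mp hc
    exact (Int.not_odd_iff_even.mpr this) hQm1odd
  have hsodd : Odd ((St a (m+1)).2.2 + a (m+2)) := by
    have i2 : Odd ((St a (m+1)).2.2) ↔ Odd (Q (m+1)) ∧ Odd (Q m) := hinv.2.2
    have hmul : Even (a (m+2) * Q (m+1)) ↔ Even (a (m+2)) := by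
      rw [Int.even_mul]
      simp [Int.not_even_iff_odd.mpr hQm1odd]
    have hqp2 : Odd (a (m+2) * Q (m+1) + Q m) := by
      have := hq2
      rwa [hQrec (m+1), show sh Q 1 (m+1) = Q m from rfl] at this
    rw [← Int.not_even_iff_odd, Int.even_add, hmul] at hqp2
    have hs : Even ((St a (m+1)).2.2) ↔ Even (Q m) := by
      rw [← Int.not_odd_iff_even, ← Int.not_odd_iff_even, i2, and_iff_right hQm1odd]
    rw [← Int.not_even_iff_odd, Int.even_add, hs]
    exact fun h => hqp2 h.symm
  have hNs : ∀ δ : ℤ, δ = 1 ∨ δ = -1 →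
      Nsum (0 :: (pfx a (m+1) ++ ((a (m+2) + δ) :: (a (m+2) - δ) :: (h₀ :: B₁).reverse)))
        = NsumAux t₀ t₀ (((St a (m+1)).2.2 + a (m+2) + t₀) + δ) T₁ := by
    intro δ hδ
    show NsumAux 0 0 0 (pfx a (m+1) ++ ((a (m+2) + δ) :: (a (m+2) - δ) :: (h₀ :: B₁).reverse)) = _
    have h1 := nsumAux_append (pfx a (m+1))
      ((a (m+2) + δ) :: (a (m+2) - δ) :: (h₀ :: B₁).reverse) ((0:ℤ), (0:ℤ), (0:ℤ))
    simp only at h1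
    rw [h1]
    rw [show (pfx a (m+1)).foldl stepN ((0:ℤ), (0:ℤ), (0:ℤ)) = St a (m+1) from rfl]
    rw [NsumAux, if_neg hflag]
    have hev : Even ((St a (m+1)).2.2 + (a (m+2) + δ)) := by
      rcases hsodd with ⟨c, hc⟩
      rcases hδ with rfl | rfl
      · exact ⟨c + 1, by linarith⟩
      · exact ⟨c, by linarith⟩
    rw [NsumAux, if_pos ⟨rfl, hev⟩]
    rw [hrev, NsumAux, if_neg (by
      rintro ⟨hb, -⟩
      rcases hδ with rfl | rfl <;> omega)]
    rw [show (St a (m+1)).2.2 + (a (m+2) + δ) + 0 + t₀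
        = ((St a (m+1)).2.2 + a (m+2) + t₀) + δ by ring]
  have hdiff : Nsum (0 :: (pfx a (m+1) ++ ((a (m+2) + 1) :: (a (m+2) - 1) :: (h₀ :: B₁).reverse)))
      = Nsum (0 :: (pfx a (m+1) ++ ((a (m+2) + (-1)) :: (a (m+2) - (-1)) :: (h₀ :: B₁).reverse))) + 2 := by
    rw [hNs 1 (Or.inl rfl), hNs (-1) (Or.inr rfl)]
    rw [show ((St a (m+1)).2.2 + a (m+2) + t₀) + 1
        = (((St a (m+1)).2.2 + a (m+2) + t₀) + (-1)) + 2 * 1 by ring]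
    rw [nsumAux_shift]
    ring
  -- identify l1 and l2
  have hcast : (((-1:ℤ)^(m+2) : ℤ) : ℚ) = (-1:ℚ)^(m+2) := by push_cast; ring
  rcases Nat.even_or_odd (m+2) with hpar | hpar
  · have he : (-1:ℤ)^(m+2) = 1 := Even.neg_one_pow hpar
    have heq : (-1:ℚ)^(m+2) = 1 := Even.neg_one_pow hpar
    have hl1e : l1 = (0 :: (pfx a (m+1) ++ ((a (m+2) + (-1)) :: (a (m+2) - (-1)) :: (h₀ :: B₁).reverse))) := by
      apply validcf_uniq _ _ hl1 (hvalid (-1) (Or.inr rfl))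
      rw [hc1, hkey (-1) (Or.inr rfl), heq]
      push_cast
      ring
    have hl2e : l2 = (0 :: (pfx a (m+1) ++ ((a (m+2) + 1) :: (a (m+2) - 1) :: (h₀ :: B₁).reverse))) := by
      apply validcf_uniq _ _ hl2 (hvalid 1 (Or.inl rfl))
      rw [hc2, hkey 1 (Or.inl rfl), heq]
      norm_num
    rw [hl1e, hl2e, he, hdiff]
    rw [show Nsum (0 :: (pfx a (m+1) ++ ((a (m+2) + (-1)) :: (a (m+2) - (-1)) :: (h₀ :: B₁).reverse))) + 2
        = Nsum (0 :: (pfx a (m+1) ++ ((a (m+2) + (-1)) :: (a (m+2) - (-1)) :: (h₀ :: B₁).reverse))) + 1 * 2 by ring]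
    rw [Int.add_mul_ediv_right _ _ (by norm_num : (2:ℤ) ≠ 0)]
  · have he : (-1:ℤ)^(m+2) = -1 := Odd.neg_one_pow hpar
    have heq : (-1:ℚ)^(m+2) = -1 := Odd.neg_one_pow hpar
    have hl1e : l1 = (0 :: (pfx a (m+1) ++ ((a (m+2) + 1) :: (a (m+2) - 1) :: (h₀ :: B₁).reverse))) := by
      apply validcf_uniq _ _ hl1 (hvalid 1 (Or.inl rfl))
      rw [hc1, hkey 1 (Or.inl rfl), heq]
      push_cast
      ring
    have hl2e : l2 = (0 :: (pfx a (m+1) ++ ((a (m+2) + (-1)) :: (a (m+2) - (-1)) :: (h₀ :: B₁).reverse))) := by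
      apply validcf_uniq _ _ hl2 (hvalid (-1) (Or.inr rfl))
      rw [hc2, hkey (-1) (Or.inr rfl), heq]
      norm_num
    rw [hl1e, hl2e, he, hdiff]
    rw [show Nsum (0 :: (pfx a (m+1) ++ ((a (m+2) + (-1)) :: (a (m+2) - (-1)) :: (h₀ :: B₁).reverse))) + 2
        = Nsum (0 :: (pfx a (m+1) ++ ((a (m+2) + (-1)) :: (a (m+2) - (-1)) :: (h₀ :: B₁).reverse))) + 1 * 2 by ring]
    rw [Int.add_mul_ediv_right _ _ (by norm_num : (2:ℤ) ≠ 0)]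
    ring
end

section
/- Let p, q be coprime odd positive integers with p > q, q/p = [a_0, a_1, ..., a_n] (a_0 = 0, a_i > 0, a_n > 1), convergents q_i/p_i. Suppose n is odd and k ≤ -2 is an integer. Then (3p_{n-1} + p(3k-1)) / (3q_{n-1} + q(3k-1)) = [a_1, a_2, ..., a_{n-1}, a_n - 1, 1, |k| - 1, 3] (as rationals, where both numerator and denominator are negative so the fraction is positive). -/
/-! With `x = [a_n - 1, 1, |k| - 1, 3]`, the right-hand side is
`[a_1, …, a_{n-1}, x] = (P_n + (x - a_n) P_{n-1}) / (Q_n + (x - a_n) Q_{n-1})`, and a direct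
computation gives `x - a_n = 3 / (3k - 1)`; clearing this denominator gives the left-hand side. -/

lemma cf_cons_of_ne_nil (a : ℤ) {l : List ℤ} (hl : l ≠ []) : cf (a :: l) = a + (cf l)⁻¹ := by
  cases l with
  | nil => contradiction
  | cons b t => rfl

lemma cf_pos {l : List ℤ} (hl : l ≠ []) (hpos : ∀ a ∈ l, 0 < a) : 0 < cf l := by
  induction l with
  | nil => contradiction
  | cons a t ih =>
    have ha : (0 : ℚ) < a := by exact_mod_cast hpos a List.mem_cons_self
    rcases eq_or_ne t [] with rfl | ht
    · simpa [cf] using ha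
    · have := ih ht fun b hb => hpos b (List.mem_cons_of_mem a hb)
      rw [cf_cons_of_ne_nil a ht]
      positivity

/-- The convergent formula `(x P_j + P_{j-1}) / (x Q_j + Q_{j-1})` for `x = cf m`, with `P_{j-1}`
eliminated through the recurrence so that `j = 0` needs no convergent of index `-1`. -/
lemma cf_ofFn_append (a P Q : ℕ → ℤ)
    (hP0 : P 0 = 1) (hP1 : P 1 = a 1) (hPr : ∀ i, P (i+2) = a (i+2) * P (i+1) + P i)
    (hQ0 : Q 0 = 0) (hQ1 : Q 1 = 1) (hQr : ∀ i, Q (i+2) = a (i+2) * Q (i+1) + Q i)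
    (j : ℕ) (hpos : ∀ i, 1 ≤ i → i ≤ j → 0 < a i) {m : List ℤ} (hm : m ≠ [])
    (hmpos : ∀ b ∈ m, 0 < b) :
    cf ((List.ofFn fun i : Fin j => a (i+1)) ++ m)
      = ((cf m - a (j+1)) * P j + P (j+1)) / ((cf m - a (j+1)) * Q j + Q (j+1)) := by
  induction j generalizing m with
  | zero => simp [hP0, hP1, hQ0, hQ1]
  | succ j ih =>
    have hx := cf_pos hm hmpos
    have ha : 0 < a (j+1) := hpos (j+1) (by omega) le_rfl
    rw [List.ofFn_succ_last]
    simp only [Fin.val_castSucc, Fin.val_last, List.append_assoc, List.singleton_append]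
    rw [ih (fun i h1 h2 => hpos i h1 (by omega)) (List.cons_ne_nil _ _)
        (List.forall_mem_cons.2 ⟨ha, hmpos⟩),
      cf_cons_of_ne_nil _ hm, hPr, hQr]
    push_cast
    rw [← mul_div_mul_left _ _ hx.ne']
    congr 1 <;> field_simp <;> ring

lemma cf_sub_one_one_three (c t : ℤ) : cf [c - 1, 1, t, 3] = c - 3 / (3 * t + 4) := by
  have h1 : (3 * t + 1 : ℚ) ≠ 0 := by exact_mod_cast (by omega : 3 * t + 1 ≠ 0)
  have h4 : (3 * t + 4 : ℚ) ≠ 0 := by exact_mod_cast (by omega : 3 * t + 4 ≠ 0)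
  simp only [cf]
  push_cast
  rw [show (t : ℚ) + 3⁻¹ = (3 * t + 1) / 3 by ring, inv_div,
    show 1 + 3 / (3 * (t : ℚ) + 1) = (3 * t + 4) / (3 * t + 1) by field_simp; ring, inv_div]
  field_simp
  ring

theorem crosscap_stmt15_general (p q n : ℕ) (a P Q : ℕ → ℤ) (k : ℤ)
    (hpos : ∀ i, 1 ≤ i → i ≤ n → 0 < a i) (hlast : 1 < a n)
    (hP0 : P 0 = 1) (hP1 : P 1 = a 1) (hPr : ∀ i, P (i+2) = a (i+2) * P (i+1) + P i)
    (hQ0 : Q 0 = 0) (hQ1 : Q 1 = 1) (hQr : ∀ i, Q (i+2) = a (i+2) * Q (i+1) + Q i)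
    (hPn : P n = p) (hQn : Q n = q) (hnodd : Odd n) (hk : k ≤ -2) :
    ((3 * P (n-1) + (p : ℤ) * (3 * k - 1) : ℤ) : ℚ) /
        ((3 * Q (n-1) + (q : ℤ) * (3 * k - 1) : ℤ) : ℚ)
      = cf ((List.ofFn fun i : Fin (n-1) => a (i+1)) ++
          [a n - 1, 1, (k.natAbs : ℤ) - 1, 3]) := by
  obtain ⟨j, rfl⟩ : ∃ j, n = j + 1 := ⟨n - 1, (Nat.sub_add_cancel hnodd.pos).symm⟩
  have htail_pos : ∀ b ∈ [a (j+1) - 1, 1, (k.natAbs : ℤ) - 1, 3], 0 < b := by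
    simp only [List.mem_cons, List.not_mem_nil, or_false]
    omega
  have h3k : (3 * k - 1 : ℚ) ≠ 0 := by exact_mod_cast (by omega : 3 * k - 1 ≠ 0)
  have htail : cf [a (j+1) - 1, 1, (k.natAbs : ℤ) - 1, 3] - a (j+1) = 3 / (3 * k - 1) := by
    rw [cf_sub_one_one_three, Int.ofNat_natAbs_of_nonpos (by omega)]
    push_cast
    rw [show 3 * (-(k : ℚ) - 1) + 4 = -(3 * k - 1) by ring, div_neg]
    ring
  rw [Nat.add_sub_cancel, cf_ofFn_append a P Q hP0 hP1 hPr hQ0 hQ1 hQr j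
    (fun i h1 h2 => hpos i h1 (by omega)) (List.cons_ne_nil _ _) htail_pos, htail, hPn, hQn]
  have hclear : ∀ x y : ℚ, 3 / (3 * k - 1) * x + y = (3 * x + y * (3 * k - 1)) / (3 * k - 1) :=
    fun x y => by field_simp
  rw [hclear, hclear, div_div_div_cancel_right₀ h3k]
  push_cast
  ring

theorem crosscap_stmt15 (p q n : ℕ) (a P Q : ℕ → ℤ) (k : ℤ)
    (hq : 0 < q) (hqp : q < p) (hcop : Nat.Coprime p q) (hpodd : Odd p) (hqodd : Odd q)
    (h0 : a 0 = 0) (hpos : ∀ i, 1 ≤ i → i ≤ n → 0 < a i) (hlast : 1 < a n)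
    (hcf : cf (List.ofFn fun i : Fin (n+1) => a i) = (q : ℚ) / p)
    (hP0 : P 0 = 1) (hP1 : P 1 = a 1) (hPr : ∀ i, P (i+2) = a (i+2) * P (i+1) + P i)
    (hQ0 : Q 0 = 0) (hQ1 : Q 1 = 1) (hQr : ∀ i, Q (i+2) = a (i+2) * Q (i+1) + Q i)
    (hPn : P n = p) (hQn : Q n = q) (hnodd : Odd n) (hk : k ≤ -2) :
    ((3 * P (n-1) + (p : ℤ) * (3 * k - 1) : ℤ) : ℚ) /
        ((3 * Q (n-1) + (q : ℤ) * (3 * k - 1) : ℤ) : ℚ)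
      = cf ((List.ofFn fun i : Fin (n-1) => a (i+1)) ++
          [a n - 1, 1, (k.natAbs : ℤ) - 1, 3]) :=
  crosscap_stmt15_general p q n a P Q k hpos hlast hP0 hP1 hPr hQ0 hQ1 hQr hPn hQn hnodd hk
end
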